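/- arXiv:dg-ga/9603009 — 2 statements merged into one kernel-verified Lean document; each statement's English description precedes it below -/
import Mathlib

section
/- Let U ⊆ ℝⁿ be open and let 𝓛 : U × Matrix(n×k, ℝ) × Matrix(r×k, ℝ) → ℝ be smooth, written 𝓛(x, p, w), satisfying for each fixed x the fundamental equations in the entries of the stacked (n+r)×k matrix (p over w). Define Δ𝓛(x, p, ŵ) := (−1)^r Σ_{K=1}^{k} Σ_{A=1}^{n} w'^K (∂²𝓛/∂x^A∂p_A^K)(x, p, w) for ŵ ∈ Matrix((r+1)×k, ℝ) with first r rows w and last row w', and apply the same construction again to Δ𝓛 (with r replaced by r+1). Then Δ(Δ𝓛) = 0 identically. -/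
open MeasureTheory
open scoped BigOperators

noncomputable section

/-- Product of matrices given as functions (entry `(i,k)` is `∑ j, M i j * N j k`). -/
def mmul {a b c : ℕ} (M : Fin a → Fin b → ℝ) (N : Fin b → Fin c → ℝ) :
    Fin a → Fin c → ℝ :=
  fun i k => ∑ j, M i j * N j k

/-- Determinant of a square matrix given as a function. -/
def fdet {a : ℕ} (M : Fin a → Fin a → ℝ) : ℝ :=
  Matrix.det (Matrix.of M)

/-- Partial derivative of a function of a matrix with respect to the `(i,j)` entry. -/
def pdM {a b : ℕ} (L : (Fin a → Fin b → ℝ) → ℝ) (i : Fin a) (j : Fin b)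
    (m : Fin a → Fin b → ℝ) : ℝ :=
  deriv (fun t : ℝ => L (fun i' j' => m i' j' + (if i' = i ∧ j' = j then t else 0))) 0

/-- Partial derivative of a function of a vector with respect to the `i`-th coordinate. -/
def pdV {a : ℕ} (f : (Fin a → ℝ) → ℝ) (i : Fin a) (x : Fin a → ℝ) : ℝ :=
  deriv (fun t : ℝ => f (fun i' => x i' + (if i' = i then t else 0))) 0

/-- The fundamental equations for a function of an `a × b` matrix:
for all rows `i₁, i₂` and columns `j₁, j₂`,
`∂²L/∂m_{i₁}^{j₁}∂m_{i₂}^{j₂} + ∂²L/∂m_{i₂}^{j₁}∂m_{i₁}^{j₂} = 0`. -/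
def FundEqs {a b : ℕ} (L : (Fin a → Fin b → ℝ) → ℝ) : Prop :=
  ∀ (i₁ i₂ : Fin a) (j₁ j₂ : Fin b) (m : Fin a → Fin b → ℝ),
    pdM (fun m' => pdM L i₂ j₂ m') i₁ j₁ m + pdM (fun m' => pdM L i₁ j₂ m') i₂ j₁ m = 0

/-- The velocity matrix of a path `γ`: `(vel γ t) F A = ∂γ^A/∂t^F (t)`. -/
def vel {r n : ℕ} (γ : (Fin r → ℝ) → (Fin n → ℝ)) (t : Fin r → ℝ) :
    Fin r → Fin n → ℝ :=
  fun F A => pdV (fun s => γ s A) F t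

/-- The matrix of gradients of a copath `f`: `(grad f x) A K = ∂f^K/∂x^A (x)`. -/
def grad {n k : ℕ} (f : (Fin n → ℝ) → (Fin k → ℝ)) (x : Fin n → ℝ) :
    Fin n → Fin k → ℝ :=
  fun A K => pdV (fun y => f y K) A x

/-- An even `r`-form on an open set `U ⊆ ℝⁿ`: a smooth function `L(x, ẋ)` of a point
`x` and an `r × n` matrix `ẋ` which is covariant (`L(x, h·ẋ) = det h · L(x, ẋ)` for
invertible `h`) and satisfies the fundamental equations in the entries of `ẋ`. -/
def IsEvenForm {n r : ℕ} (U : Set (Fin n → ℝ))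
    (L : (Fin n → ℝ) → (Fin r → Fin n → ℝ) → ℝ) : Prop :=
  ContDiffOn ℝ (⊤ : ℕ∞)
      (fun q : (Fin n → ℝ) × (Fin r → Fin n → ℝ) => L q.1 q.2)
      (U ×ˢ (Set.univ : Set (Fin r → Fin n → ℝ))) ∧
  (∀ x ∈ U, ∀ (xdot : Fin r → Fin n → ℝ) (h : Fin r → Fin r → ℝ), fdet h ≠ 0 →
    L x (mmul h xdot) = fdet h * L x xdot) ∧
  (∀ x ∈ U, FundEqs (L x))

/-- The differential of a Lagrangian of paths `L(x, ẋ)`: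
`ΔL(x, (ẋ; ẏ)) = (−1)^r Σ_A ẏ^A (∂L/∂x^A − Σ_{F,B} ẋ_F^B ∂²L/∂x^B∂ẋ_F^A)`,
where `ẋ` consists of the first `r` rows and `ẏ` is the last row of the argument. -/
def Dform {n r : ℕ} (L : (Fin n → ℝ) → (Fin r → Fin n → ℝ) → ℝ) :
    (Fin n → ℝ) → (Fin (r + 1) → Fin n → ℝ) → ℝ :=
  fun x M => (-1 : ℝ) ^ r * ∑ A, M (Fin.last r) A *
    (pdV (fun x' => L x' (fun F => M (Fin.castSucc F))) A x
      - ∑ F, ∑ B, M (Fin.castSucc F) B *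
          pdV (fun x' => pdM (L x') F A (fun G => M (Fin.castSucc G))) B x)

/-- An even mixed form of codegree `k` and additional degree `r` on an open set
`U ⊆ ℝⁿ`: a smooth function `𝓛(x, p, w)` which is right-covariant, left-covariant,
admissible, and satisfies the fundamental equations in the entries of the stacked
`(n+r) × k` matrix (`p` over `w`). -/
def IsMixedForm {n k r : ℕ} (U : Set (Fin n → ℝ))
    (L : (Fin n → ℝ) → (Fin n → Fin k → ℝ) → (Fin r → Fin k → ℝ) → ℝ) : Prop :=
  ContDiffOn ℝ (⊤ : ℕ∞)
      (fun q : (Fin n → ℝ) × (Fin n → Fin k → ℝ) × (Fin r → Fin k → ℝ) =>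
        L q.1 q.2.1 q.2.2)
      (U ×ˢ (Set.univ : Set ((Fin n → Fin k → ℝ) × (Fin r → Fin k → ℝ)))) ∧
  (∀ x ∈ U, ∀ (p : Fin n → Fin k → ℝ) (w : Fin r → Fin k → ℝ) (g : Fin k → Fin k → ℝ),
    fdet g ≠ 0 → L x (mmul p g) (mmul w g) = fdet g * L x p w) ∧
  (∀ x ∈ U, ∀ (p : Fin n → Fin k → ℝ) (w : Fin r → Fin k → ℝ) (h : Fin r → Fin r → ℝ),
    fdet h ≠ 0 → L x p (mmul h w) = fdet h * L x p w) ∧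
  (∀ x ∈ U, ∀ (p : Fin n → Fin k → ℝ) (w : Fin r → Fin k → ℝ) (a : Fin n → Fin r → ℝ),
    L x (p + mmul a w) w = L x p w) ∧
  (∀ x ∈ U, FundEqs (fun m : Fin (n + r) → Fin k → ℝ =>
    L x (fun A => m (Fin.castAdd r A)) (fun F => m (Fin.natAdd n F))))

/-- The differential of a mixed Lagrangian `𝓛(x, p, w)`:
`Δ𝓛(x, p, ŵ) = (−1)^r Σ_{K,A} w'^K ∂²𝓛/∂x^A∂p_A^K (x, p, w)`, where `ŵ` has first
`r` rows `w` and last row `w'`. -/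
def Dmix {n k r : ℕ}
    (L : (Fin n → ℝ) → (Fin n → Fin k → ℝ) → (Fin r → Fin k → ℝ) → ℝ) :
    (Fin n → ℝ) → (Fin n → Fin k → ℝ) → (Fin (r + 1) → Fin k → ℝ) → ℝ :=
  fun x p what => (-1 : ℝ) ^ r * ∑ K, ∑ A, what (Fin.last r) K *
    pdV (fun x' => pdM (fun p' => L x' p' (fun F => what (Fin.castSucc F))) A K p) A x

/-- An even dual form of codegree `k` on an open set `U ⊆ ℝⁿ`: a smooth function
`𝓛(x, p)` of a point `x` and an `n × k` matrix `p` of momenta which is covariant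
(`𝓛(x, p·g) = det g · 𝓛(x, p)` for invertible `g`) and satisfies the fundamental
equations in the entries of `p`. -/
def IsDualForm {n k : ℕ} (U : Set (Fin n → ℝ))
    (L : (Fin n → ℝ) → (Fin n → Fin k → ℝ) → ℝ) : Prop :=
  ContDiffOn ℝ (⊤ : ℕ∞)
      (fun q : (Fin n → ℝ) × (Fin n → Fin k → ℝ) => L q.1 q.2)
      (U ×ˢ (Set.univ : Set (Fin n → Fin k → ℝ))) ∧
  (∀ x ∈ U, ∀ (p : Fin n → Fin k → ℝ) (g : Fin k → Fin k → ℝ), fdet g ≠ 0 →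
    L x (mmul p g) = fdet g * L x p) ∧
  (∀ x ∈ U, FundEqs (L x))

/-- The identity matrix as a function. -/
def idm (n : ℕ) : Fin n → Fin n → ℝ := fun i j => if i = j then 1 else 0

/-!
Put `f(x, p) = 𝓛(x, p, w)`. Both applications of `Δ` are linear combinations of the operators
`g ↦ ∑_A ∂²g/∂x^A∂p_A^K`, so `ΔΔ𝓛` is a combination of the sums
`∑_{A,B} ∂_{x^A} ∂_{x^B} ∂_{p_A^K} ∂_{p_B^J} f` (partial derivatives of a smooth function
commute). The fundamental equations say that `∂²f/∂p_A^K∂p_B^J` changes sign when `A` and `B`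
are exchanged (keeping `K` and `J` in place), so each of these sums is the sum of an
antisymmetric array and vanishes.
-/

open Set Filter Topology

section DirDeriv

variable {E : Type*} [NormedAddCommGroup E] [NormedSpace ℝ E] {O : Set E}

def dirDeriv (v : E) (g : E → ℝ) : E → ℝ := fun q => fderiv ℝ g q v

theorem ContDiffOn.differentiableAt_of_isOpen {F : Type*} [NormedAddCommGroup F]
    [NormedSpace ℝ F] {g : E → F} (hg : ContDiffOn ℝ (⊤ : ℕ∞) g O)
    (hO : IsOpen O) {q : E} (hq : q ∈ O) : DifferentiableAt ℝ g q :=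
  (hg.contDiffAt (hO.mem_nhds hq)).differentiableAt (by simp)

theorem ContDiffOn.dirDeriv {g : E → ℝ} (hg : ContDiffOn ℝ (⊤ : ℕ∞) g O) (hO : IsOpen O)
    (v : E) : ContDiffOn ℝ (⊤ : ℕ∞) (dirDeriv v g) O :=
  (hg.fderiv_of_isOpen hO (by exact_mod_cast le_top)).clm_apply contDiffOn_const

theorem dirDeriv_comm {g : E → ℝ} (hg : ContDiffOn ℝ (⊤ : ℕ∞) g O) (hO : IsOpen O)
    {q : E} (hq : q ∈ O) (u v : E) :
    dirDeriv u (dirDeriv v g) q = dirDeriv v (dirDeriv u g) q := by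
  have hdiff : DifferentiableAt ℝ (fderiv ℝ g) q :=
    (hg.fderiv_of_isOpen hO (by exact_mod_cast le_top)).differentiableAt_of_isOpen hO hq
  have hsymm : IsSymmSndFDerivAt ℝ g q :=
    (hg.contDiffAt (hO.mem_nhds hq)).isSymmSndFDerivAt
      (by rw [minSmoothness_of_isRCLikeNormedField]; exact WithTop.coe_le_coe.mpr le_top)
  have hsnd : ∀ w z : E, dirDeriv w (dirDeriv z g) q = fderiv ℝ (fderiv ℝ g) q w z := by
    intro w z
    change fderiv ℝ (fun y => fderiv ℝ g y z) q w = _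
    simp [fderiv_clm_apply hdiff (differentiableAt_const z)]
  rw [hsnd, hsnd, hsymm u v]

theorem dirDeriv_congr {g h : E → ℝ} (hO : IsOpen O) (hgh : EqOn g h O) (v : E) :
    EqOn (dirDeriv v g) (dirDeriv v h) O := fun q hq => by
  simp only [dirDeriv, (eventuallyEq_of_mem (hO.mem_nhds hq) hgh).fderiv_eq]

theorem dirDeriv_neg (g : E → ℝ) (v : E) :
    dirDeriv v (fun q => -g q) = fun q => -dirDeriv v g q := by
  ext q
  simp [dirDeriv]

theorem dirDeriv_sum {ι : Type*} [Fintype ι] {g : ι → E → ℝ} {q : E}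
    (hg : ∀ i, DifferentiableAt ℝ (g i) q) (v : E) :
    dirDeriv v (fun q' => ∑ i, g i q') q = ∑ i, dirDeriv v (g i) q := by
  simp [dirDeriv, fderiv_fun_sum fun i _ => hg i]

theorem dirDeriv_const_mul {g : E → ℝ} {q : E} (hg : DifferentiableAt ℝ g q) (c : ℝ) (v : E) :
    dirDeriv v (fun q' => c * g q') q = c * dirDeriv v g q := by
  simp [dirDeriv, fderiv_const_mul hg]

end DirDeriv

theorem Finset.sum_sum_eq_zero_of_antisymm {ι : Type*} [Fintype ι] {f : ι → ι → ℝ}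
    (hf : ∀ a b, f a b = -f b a) : ∑ a, ∑ b, f a b = 0 := by
  have h : ∑ a, ∑ b, f a b = -∑ a, ∑ b, f a b := by
    calc ∑ a, ∑ b, f a b = ∑ a, ∑ b, -f b a := by simp_rw [← hf]
      _ = -∑ a, ∑ b, f b a := by simp
      _ = -∑ a, ∑ b, f a b := by rw [Finset.sum_comm]
  linarith

section PhaseSpace

abbrev PhaseSpace (n k : ℕ) : Type := (Fin n → ℝ) × (Fin n → Fin k → ℝ)

variable {n k : ℕ}

def xDir (A : Fin n) : PhaseSpace n k := (Pi.single A 1, 0)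

def pDir (A : Fin n) (K : Fin k) : PhaseSpace n k :=
  (0, fun i j => if i = A ∧ j = K then 1 else 0)

def divXP (K : Fin k) (g : PhaseSpace n k → ℝ) : PhaseSpace n k → ℝ :=
  fun q => ∑ A, dirDeriv (xDir A) (dirDeriv (pDir A K) g) q

variable {O : Set (PhaseSpace n k)}

theorem ContDiffOn.divXP {g : PhaseSpace n k → ℝ} (hg : ContDiffOn ℝ (⊤ : ℕ∞) g O)
    (hO : IsOpen O) (K : Fin k) : ContDiffOn ℝ (⊤ : ℕ∞) (divXP K g) O :=
  ContDiffOn.sum fun _ _ => (hg.dirDeriv hO _).dirDeriv hO _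

theorem divXP_sum_mul {ι : Type*} [Fintype ι] {g : ι → PhaseSpace n k → ℝ}
    (hg : ∀ i, ContDiffOn ℝ (⊤ : ℕ∞) (g i) O) (hO : IsOpen O) (c : ι → ℝ) (K : Fin k) :
    EqOn (divXP K fun q => ∑ i, c i * g i q) (fun q => ∑ i, c i * divXP K (g i) q) O := by
  intro q hq
  have hinner : ∀ A, EqOn (dirDeriv (pDir A K) fun q => ∑ i, c i * g i q)
      (fun q => ∑ i, c i * dirDeriv (pDir A K) (g i) q) O := fun A q hq => by
    have hd i : DifferentiableAt ℝ (g i) q := (hg i).differentiableAt_of_isOpen hO hq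
    rw [dirDeriv_sum fun i => (hd i).const_mul (c i)]
    simp only [dirDeriv_const_mul (hd _)]
  have hd A i : DifferentiableAt ℝ (dirDeriv (pDir A K) (g i)) q :=
    ((hg i).dirDeriv hO _).differentiableAt_of_isOpen hO hq
  calc divXP K (fun q => ∑ i, c i * g i q) q
      = ∑ A, ∑ i, c i * dirDeriv (xDir A) (dirDeriv (pDir A K) (g i)) q := by
        refine Finset.sum_congr rfl fun A _ => ?_
        rw [dirDeriv_congr hO (hinner A) _ hq, dirDeriv_sum fun i => (hd A i).const_mul (c i)]
        simp only [dirDeriv_const_mul (hd A _)]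
    _ = ∑ i, c i * divXP K (g i) q := by
        simp only [divXP, Finset.mul_sum]
        exact Finset.sum_comm

theorem divXP_divXP_eq_zero {g : PhaseSpace n k → ℝ} (hg : ContDiffOn ℝ (⊤ : ℕ∞) g O)
    (hO : IsOpen O)
    (hanti : ∀ q ∈ O, ∀ A B K J, dirDeriv (pDir A K) (dirDeriv (pDir B J) g) q
      = -dirDeriv (pDir B K) (dirDeriv (pDir A J) g) q)
    (K J : Fin k) {q : PhaseSpace n k} (hq : q ∈ O) : divXP K (divXP J g) q = 0 := by
  have hg₁ B := hg.dirDeriv hO (pDir B J)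
  have hexpand : ∀ A, EqOn (dirDeriv (pDir A K) (divXP J g))
      (fun q => ∑ B, dirDeriv (pDir A K) (dirDeriv (xDir B) (dirDeriv (pDir B J) g)) q) O :=
    fun A q hq => dirDeriv_sum
      (fun B => ((hg₁ B).dirDeriv hO _).differentiableAt_of_isOpen hO hq) _
  have hswap : ∀ A B, EqOn (dirDeriv (pDir A K) (dirDeriv (xDir B) (dirDeriv (pDir B J) g)))
      (dirDeriv (xDir B) (dirDeriv (pDir A K) (dirDeriv (pDir B J) g))) O :=
    fun A B q hq => dirDeriv_comm (hg₁ B) hO hq _ _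
  have hxanti : ∀ A B, EqOn (dirDeriv (xDir B) (dirDeriv (pDir A K) (dirDeriv (pDir B J) g)))
      (fun q => -dirDeriv (xDir B) (dirDeriv (pDir B K) (dirDeriv (pDir A J) g)) q) O := by
    intro A B
    rw [← dirDeriv_neg]
    exact dirDeriv_congr hO (fun q hq => hanti q hq A B K J) _
  have hT : ∀ A B, dirDeriv (xDir A) (dirDeriv (xDir B) (dirDeriv (pDir A K)
        (dirDeriv (pDir B J) g))) q
      = -dirDeriv (xDir B) (dirDeriv (xDir A) (dirDeriv (pDir B K)
        (dirDeriv (pDir A J) g))) q := by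
    intro A B
    rw [dirDeriv_congr hO (hxanti A B) _ hq, dirDeriv_neg,
      dirDeriv_comm ((hg.dirDeriv hO _).dirDeriv hO _) hO hq]
  calc divXP K (divXP J g) q
      = ∑ A, ∑ B, dirDeriv (xDir A) (dirDeriv (xDir B) (dirDeriv (pDir A K)
          (dirDeriv (pDir B J) g))) q := by
        refine Finset.sum_congr rfl fun A _ => ?_
        rw [dirDeriv_congr hO (hexpand A) _ hq, dirDeriv_sum fun B =>
          (((hg₁ B).dirDeriv hO _).dirDeriv hO _).differentiableAt_of_isOpen hO hq]
        exact Finset.sum_congr rfl fun B _ => dirDeriv_congr hO (hswap A B) _ hq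
    _ = 0 := Finset.sum_sum_eq_zero_of_antisymm hT

end PhaseSpace

section Coordinates

variable {n k : ℕ}

theorem pdM_eq_dirDeriv {g : PhaseSpace n k → ℝ} {x : Fin n → ℝ} {p : Fin n → Fin k → ℝ}
    (hg : DifferentiableAt ℝ g (x, p)) (A : Fin n) (K : Fin k) :
    pdM (fun p' => g (x, p')) A K p = dirDeriv (pDir A K) g (x, p) := by
  rw [dirDeriv, ← hg.lineDeriv_eq_fderiv, lineDeriv, pdM]
  congr with t
  congr 1
  ext i j <;> simp [pDir]

theorem pdV_eq_dirDeriv {g : PhaseSpace n k → ℝ} {x : Fin n → ℝ} {p : Fin n → Fin k → ℝ}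
    (hg : DifferentiableAt ℝ g (x, p)) (A : Fin n) :
    pdV (fun x' => g (x', p)) A x = dirDeriv (xDir A) g (x, p) := by
  rw [dirDeriv, ← hg.lineDeriv_eq_fderiv, lineDeriv, pdV]
  congr with t
  congr 1
  ext i <;> simp [xDir, Pi.single_apply]

theorem pdV_congr {F G : (Fin n → ℝ) → ℝ} {x : Fin n → ℝ} (h : F =ᶠ[𝓝 x] G) (A : Fin n) :
    pdV F A x = pdV G A x := by
  have hcont : Continuous fun t : ℝ => fun i => x i + if i = A then t else 0 :=
    continuous_pi fun i => by split_ifs <;> fun_prop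
  exact EventuallyEq.deriv_eq ((hcont.tendsto' 0 x (by simp)).eventually h)

theorem dirDeriv_pDir_antisymm_of_fundEqs {U : Set (Fin n → ℝ)} (hU : IsOpen U)
    {g : PhaseSpace n k → ℝ} (hg : ContDiffOn ℝ (⊤ : ℕ∞) g (U ×ˢ univ))
    (hfund : ∀ x ∈ U, FundEqs fun p => g (x, p)) :
    ∀ q ∈ U ×ˢ univ, ∀ A B K J, dirDeriv (pDir A K) (dirDeriv (pDir B J) g) q
      = -dirDeriv (pDir B K) (dirDeriv (pDir A J) g) q := by
  rintro ⟨x, p⟩ ⟨hx, -⟩ A B K J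
  have hO : IsOpen (U ×ˢ (univ : Set (Fin n → Fin k → ℝ))) := hU.prod isOpen_univ
  have hmem (p' : Fin n → Fin k → ℝ) : (x, p') ∈ U ×ˢ univ := mk_mem_prod hx (mem_univ p')
  have hsnd : ∀ A B K J, pdM (fun p' => pdM (fun p'' => g (x, p'')) B J p') A K p
      = dirDeriv (pDir A K) (dirDeriv (pDir B J) g) (x, p) := by
    intro A B K J
    simp_rw [pdM_eq_dirDeriv (hg.differentiableAt_of_isOpen hO (hmem _))]
    exact pdM_eq_dirDeriv ((hg.dirDeriv hO _).differentiableAt_of_isOpen hO (hmem p)) A K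
  have h := hfund x hx A B K J p
  rw [hsnd, hsnd] at h
  linarith

theorem Dmix_eq_divXP {r : ℕ} {U : Set (Fin n → ℝ)} (hU : IsOpen U)
    {M : (Fin n → ℝ) → (Fin n → Fin k → ℝ) → (Fin r → Fin k → ℝ) → ℝ}
    {what : Fin (r + 1) → Fin k → ℝ} {H : PhaseSpace n k → ℝ}
    (hH : ContDiffOn ℝ (⊤ : ℕ∞) H (U ×ˢ univ))
    (hMH : ∀ x ∈ U, ∀ p, M x p (fun F => what F.castSucc) = H (x, p))
    {x : Fin n → ℝ} (hx : x ∈ U) (p : Fin n → Fin k → ℝ) :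
    Dmix M x p what = (-1) ^ r * ∑ K, what (Fin.last r) K * divXP K H (x, p) := by
  have hO : IsOpen (U ×ˢ (univ : Set (Fin n → Fin k → ℝ))) := hU.prod isOpen_univ
  have hmem {x'} (hx' : x' ∈ U) (p' : Fin n → Fin k → ℝ) : (x', p') ∈ U ×ˢ univ :=
    mk_mem_prod hx' (mem_univ p')
  rw [Dmix]
  refine congrArg _ (Finset.sum_congr rfl fun K _ => ?_)
  rw [divXP, Finset.mul_sum]
  refine Finset.sum_congr rfl fun A _ => congrArg _ ?_
  have hslice : (fun x' => pdM (fun p' => M x' p' fun F => what F.castSucc) A K p)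
      =ᶠ[𝓝 x] fun x' => dirDeriv (pDir A K) H (x', p) := by
    filter_upwards [hU.mem_nhds hx] with x' hx'
    simp_rw [hMH x' hx']
    exact pdM_eq_dirDeriv (hH.differentiableAt_of_isOpen hO (hmem hx' p)) A K
  rw [pdV_congr hslice,
    pdV_eq_dirDeriv ((hH.dirDeriv hO _).differentiableAt_of_isOpen hO (hmem hx p))]

end Coordinates

section Append

variable {a b c : ℕ}

theorem pdM_castAdd_append (φ : (Fin (a + c) → Fin b → ℝ) → ℝ) (p : Fin a → Fin b → ℝ)
    (w : Fin c → Fin b → ℝ) (i : Fin a) (j : Fin b) :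
    pdM φ (Fin.castAdd c i) j (Fin.append p w) = pdM (fun p' => φ (Fin.append p' w)) i j p := by
  simp only [pdM]
  congr with t
  congr 1
  ext i' j'
  refine Fin.addCases (fun i₀ => ?_) (fun i₀ => ?_) i'
  · simp
  · have : Fin.natAdd a i₀ ≠ Fin.castAdd c i := by simp [Fin.ext_iff]; omega
    simp [this]

theorem FundEqs.comp_append {φ : (Fin (a + c) → Fin b → ℝ) → ℝ} (h : FundEqs φ)
    (w : Fin c → Fin b → ℝ) : FundEqs fun p => φ (Fin.append p w) := by
  intro i₁ i₂ j₁ j₂ p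
  simpa only [pdM_castAdd_append] using
    h (Fin.castAdd c i₁) (Fin.castAdd c i₂) j₁ j₂ (Fin.append p w)

end Append

/-- If a smooth mixed Lagrangian `𝓛(x, p, w)` satisfies, for each
`x ∈ U`, the fundamental equations in the entries of the stacked `(n+r) × k` matrix
(`p` over `w`), then `Δ(Δ𝓛) = 0` identically. -/
theorem statement_16 (n k r : ℕ) (U : Set (Fin n → ℝ)) (hU : IsOpen U)
    (L : (Fin n → ℝ) → (Fin n → Fin k → ℝ) → (Fin r → Fin k → ℝ) → ℝ)
    (hL : ContDiffOn ℝ (⊤ : ℕ∞)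
      (fun q : (Fin n → ℝ) × (Fin n → Fin k → ℝ) × (Fin r → Fin k → ℝ) =>
        L q.1 q.2.1 q.2.2)
      (U ×ˢ (Set.univ : Set ((Fin n → Fin k → ℝ) × (Fin r → Fin k → ℝ)))))
    (hfund : ∀ x ∈ U, FundEqs (fun m : Fin (n + r) → Fin k → ℝ =>
      L x (fun A => m (Fin.castAdd r A)) (fun F => m (Fin.natAdd n F)))) :
    ∀ x ∈ U, ∀ (p : Fin n → Fin k → ℝ) (W : Fin (r + 2) → Fin k → ℝ),
      Dmix (Dmix L) x p W = 0 := by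
  intro x hx p W
  have hO : IsOpen (U ×ˢ (univ : Set (Fin n → Fin k → ℝ))) := hU.prod isOpen_univ
  have hxp : (x, p) ∈ U ×ˢ univ := mk_mem_prod hx (mem_univ p)
  set w : Fin (r + 1) → Fin k → ℝ := fun F => W F.castSucc
  set f : PhaseSpace n k → ℝ := fun q => L q.1 q.2 fun F => w F.castSucc
  have hf : ContDiffOn ℝ (⊤ : ℕ∞) f (U ×ˢ univ) :=
    hL.comp (contDiff_fst.prodMk (contDiff_snd.prodMk contDiff_const)).contDiffOn
      fun q hq => mk_mem_prod hq.1 (mem_univ _)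
  have hanti := dirDeriv_pDir_antisymm_of_fundEqs hU hf fun x hx => by
    simpa using (hfund x hx).comp_append fun F => w F.castSucc
  set H : PhaseSpace n k → ℝ := fun q => ∑ J, (-1) ^ r * w (Fin.last r) J * divXP J f q
  have hH : ContDiffOn ℝ (⊤ : ℕ∞) H (U ×ˢ univ) :=
    ContDiffOn.sum fun J _ => contDiffOn_const.mul (hf.divXP hO J)
  have hΔL : ∀ x' ∈ U, ∀ p', Dmix L x' p' w = H (x', p') := fun x' hx' p' => by
    rw [Dmix_eq_divXP hU hf (fun _ _ _ => rfl) hx', Finset.mul_sum]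
    simp only [H, mul_assoc]
  have hΔΔL K : divXP K H (x, p) = 0 := by
    rw [divXP_sum_mul (fun J => hf.divXP hO J) hO _ K hxp]
    simp [divXP_divXP_eq_zero hf hO hanti K _ hxp]
  rw [Dmix_eq_divXP hU hH hΔL hx]
  simp [hΔΔL]
end
end

section
/- Let U ⊆ ℝⁿ be open, let 𝓛 be an even mixed form of codegree n and additional degree r on U, and let L(x, w) := 𝓛(x, I_n, w) be the corresponding even r-form. Then for all x ∈ U, w ∈ Matrix(r×n, ℝ) and w' ∈ ℝⁿ, Σ_{K=1}^{n} Σ_{A=1}^{n} w'^K (∂²𝓛/∂x^A∂p_A^K)(x, I_n, w) = Σ_{A=1}^{n} w'^A (∂L/∂x^A)(x, w) − Σ_{A=1}^{n} Σ_{F=1}^{r} Σ_{B=1}^{n} w'^A w_F^B (∂²L/∂x^B∂w_F^A)(x, w); that is, the differential of mixed forms corresponds, under the isomorphism 𝓛 ↦ L of mixed forms of codegree n with forms as Lagrangians of paths, to the differential ΔL(x, (w; w')) = (−1)^r Σ_A w'^A (∂L/∂x^A − Σ_{F,B} w_F^B ∂²L/∂x^B∂w_F^A) of the latter. -/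
open MeasureTheory
open scoped BigOperators

noncomputable section

/-!
Differentiating the right covariance `𝓛(x, g, w g) = det g · 𝓛(x, 1, w)` along
`g = 1 + t E_{AK}` at `t = 0` gives, for every `x ∈ U`, the Euler identity
`∂𝓛/∂p_A^K (x, 1, w) = δ_{AK} 𝓛(x, 1, w) - Σ_F w_F^A ∂𝓛/∂w_F^K (x, 1, w)`.
Since `U` is open this holds near `x`, so it may be differentiated in `x^A`; contracting
with `w'^K` gives the claim.
-/

open Filter Topology

def unitM {a b : ℕ} (i : Fin a) (j : Fin b) : Fin a → Fin b → ℝ :=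
  fun i' j' => if i' = i ∧ j' = j then 1 else 0

theorem pdM_eq_lineDeriv {a b : ℕ} (L : (Fin a → Fin b → ℝ) → ℝ) (i : Fin a) (j : Fin b)
    (m : Fin a → Fin b → ℝ) : pdM L i j m = lineDeriv ℝ L m (unitM i j) := by
  unfold pdM lineDeriv
  congr 1; funext t; congr 1; funext i' j'
  simp [unitM, mul_ite]

theorem pdV_eq_lineDeriv {a : ℕ} (f : (Fin a → ℝ) → ℝ) (i : Fin a) (x : Fin a → ℝ) :
    pdV f i x = lineDeriv ℝ f x (Pi.single i 1) := by
  unfold pdV lineDeriv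
  congr 1; funext t; congr 1; funext i'
  by_cases h : i' = i <;> simp [h]

theorem pdV_eq_fderiv {a : ℕ} {f : (Fin a → ℝ) → ℝ} {x : Fin a → ℝ}
    (hf : DifferentiableAt ℝ f x) (i : Fin a) : pdV f i x = fderiv ℝ f x (Pi.single i 1) := by
  rw [pdV_eq_lineDeriv, hf.lineDeriv_eq_fderiv]

theorem pdV_congr_s19 {a : ℕ} {f g : (Fin a → ℝ) → ℝ} {x : Fin a → ℝ} (h : f =ᶠ[𝓝 x] g)
    (i : Fin a) : pdV f i x = pdV g i x := by
  rw [pdV_eq_lineDeriv, pdV_eq_lineDeriv, h.lineDeriv_eq]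

theorem differentiableAt_pdM {E : Type*} [NormedAddCommGroup E] [NormedSpace ℝ E] {a b : ℕ}
    {G : E → (Fin a → Fin b → ℝ) → ℝ} {x : E} {m : Fin a → Fin b → ℝ}
    (hG : ContDiffAt ℝ 2 (fun q : E × (Fin a → Fin b → ℝ) => G q.1 q.2) (x, m))
    (i : Fin a) (j : Fin b) : DifferentiableAt ℝ (fun x' => pdM (G x') i j m) x := by
  set g := fun q : E × (Fin a → Fin b → ℝ) => G q.1 q.2
  have hpair : ContDiffAt ℝ 1 (fun x' : E => (x', m)) x := contDiffAt_id.prodMk contDiffAt_const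
  have hnear : ∀ᶠ x' in 𝓝 x, DifferentiableAt ℝ g (x', m) :=
    hpair.continuousAt.eventually ((hG.eventually (by decide)).mono fun q hq =>
      hq.differentiableAt (by decide))
  have hfd : (fun x' => fderiv ℝ g (x', m) (0, unitM i j)) =ᶠ[𝓝 x]
      fun x' => pdM (G x') i j m := by
    filter_upwards [hnear] with x' hx'
    rw [← hx'.lineDeriv_eq_fderiv, pdM_eq_lineDeriv]
    simp [g, lineDeriv]
  refine DifferentiableAt.congr_of_eventuallyEq ?_ hfd.symm
  have := ((hG.fderiv_right (m := 1) (by norm_num)).comp x hpair).clm_apply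
    (contDiffAt_const (c := ((0 : E), unitM i j)))
  exact this.differentiableAt (by norm_num)

theorem mmul_unitM {a k : ℕ} (m : Fin a → Fin k → ℝ) (J K : Fin k) :
    mmul m (unitM J K) = ∑ B, m B J • unitM B K := by
  ext B' K'
  simp [mmul, unitM, Finset.sum_apply, mul_ite, ite_and]

theorem mmul_idm_add_smul_unitM {a k : ℕ} (m : Fin a → Fin k → ℝ) (J K : Fin k) (t : ℝ) :
    mmul m (idm k + t • unitM J K) = m + t • mmul m (unitM J K) := by
  ext B K'
  simp [mmul, idm, mul_add, Finset.sum_add_distrib, Finset.mul_sum, mul_left_comm]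

theorem fdet_idm_add_smul_unitM {k : ℕ} (J K : Fin k) (t : ℝ) :
    fdet (idm k + t • unitM J K) = 1 + t * if J = K then 1 else 0 := by
  by_cases hJK : J = K
  · subst hJK
    have : Matrix.of (idm k + t • unitM J J) = Matrix.diagonal (Function.update 1 J (1 + t)) := by
      ext i j
      by_cases hij : i = j
      · subst hij
        by_cases hi : i = J <;> simp [idm, unitM, hi]
      · have : ¬(i = J ∧ j = J) := fun h => hij (h.1.trans h.2.symm)
        simp [idm, unitM, hij, this]
    rw [fdet, this, Matrix.det_diagonal, Finset.prod_update_of_mem (Finset.mem_univ _)]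
    simp
  · have : Matrix.of (idm k + t • unitM J K) = Matrix.transvection J K t := by
      ext i j
      simp [idm, unitM, Matrix.transvection, Matrix.single_apply, Matrix.one_apply, eq_comm]
    rw [fdet, this, Matrix.det_transvection_of_ne J K hJK t]
    simp [hJK]

theorem sum_idm_mul {n : ℕ} (f : Fin n → ℝ) (A : Fin n) : ∑ B, idm n B A * f B = f A := by
  simp [idm]

theorem sum_mul_pdM_eq_of_covariant {a k : ℕ} {Ψ : (Fin a → Fin k → ℝ) → ℝ}
    {m : Fin a → Fin k → ℝ} (hΨ : DifferentiableAt ℝ Ψ m)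
    (hcov : ∀ g, fdet g ≠ 0 → Ψ (mmul m g) = fdet g * Ψ m) (J K : Fin k) :
    ∑ B, m B J * pdM Ψ B K m = (if J = K then 1 else 0) * Ψ m := by
  set δ : ℝ := if J = K then 1 else 0
  have hcurve : (fun t : ℝ => Ψ (m + t • mmul m (unitM J K)))
      =ᶠ[𝓝 0] fun t => (1 + t * δ) * Ψ m := by
    have hne : ∀ᶠ t : ℝ in 𝓝 0, 1 + t * δ ≠ 0 :=
      (continuous_const.add (continuous_id.mul continuous_const)).continuousAt.eventually_ne
        (by simp)
    filter_upwards [hne] with t ht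
    rw [← mmul_idm_add_smul_unitM, hcov _ (by rwa [fdet_idm_add_smul_unitM]),
      fdet_idm_add_smul_unitM]
  have hline : lineDeriv ℝ Ψ m (mmul m (unitM J K)) = δ * Ψ m := by
    rw [lineDeriv, hcurve.deriv_eq]
    simp
  simp only [pdM_eq_lineDeriv, hΨ.lineDeriv_eq_fderiv] at hline ⊢
  rw [← hline, mmul_unitM, map_sum]
  simp [map_smul]

def stackedLagrangian {n k r : ℕ}
    (L : (Fin n → ℝ) → (Fin n → Fin k → ℝ) → (Fin r → Fin k → ℝ) → ℝ) (x : Fin n → ℝ) :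
    (Fin (n + r) → Fin k → ℝ) → ℝ :=
  fun m => L x (fun A => m (Fin.castAdd r A)) (fun F => m (Fin.natAdd n F))

section Stacked

variable {n k r : ℕ} (L : (Fin n → ℝ) → (Fin n → Fin k → ℝ) → (Fin r → Fin k → ℝ) → ℝ)
  (x : Fin n → ℝ) (p : Fin n → Fin k → ℝ) (w : Fin r → Fin k → ℝ)

theorem stackedLagrangian_append : stackedLagrangian L x (Fin.append p w) = L x p w := by
  simp [stackedLagrangian]

theorem stackedLagrangian_mmul_append (g : Fin k → Fin k → ℝ) :
    stackedLagrangian L x (mmul (Fin.append p w) g) = L x (mmul p g) (mmul w g) := by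
  unfold stackedLagrangian
  congr 1 <;> funext i j <;> simp [mmul]

theorem pdM_stackedLagrangian_castAdd (B : Fin n) (K : Fin k) :
    pdM (stackedLagrangian L x) (Fin.castAdd r B) K (Fin.append p w)
      = pdM (fun p' => L x p' w) B K p := by
  unfold pdM stackedLagrangian
  congr 1; funext t; congr 1
  · funext i j; simp
  · funext i j; simp [Fin.ext_iff]; omega

theorem pdM_stackedLagrangian_natAdd (F : Fin r) (K : Fin k) :
    pdM (stackedLagrangian L x) (Fin.natAdd n F) K (Fin.append p w)
      = pdM (fun w' => L x p w') F K w := by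
  unfold pdM stackedLagrangian
  congr 1; funext t; congr 1
  · funext i j; simp [Fin.ext_iff]; omega
  · funext i j; simp

end Stacked

namespace IsMixedForm

variable {n r : ℕ} {U : Set (Fin n → ℝ)}

section

variable {k : ℕ} {L : (Fin n → ℝ) → (Fin n → Fin k → ℝ) → (Fin r → Fin k → ℝ) → ℝ}

theorem contDiffAt (hL : IsMixedForm U L) (hU : IsOpen U) {x : Fin n → ℝ} (hx : x ∈ U)
    (p : Fin n → Fin k → ℝ) (w : Fin r → Fin k → ℝ) :
    ContDiffAt ℝ (⊤ : ℕ∞) (fun q : (Fin n → ℝ) × (Fin n → Fin k → ℝ) × (Fin r → Fin k → ℝ) =>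
      L q.1 q.2.1 q.2.2) (x, p, w) :=
  hL.1.contDiffAt ((hU.prod isOpen_univ).mem_nhds (by simp [hx]))

theorem differentiableAt_stackedLagrangian (hL : IsMixedForm U L) (hU : IsOpen U)
    {x : Fin n → ℝ} (hx : x ∈ U) (p : Fin n → Fin k → ℝ) (w : Fin r → Fin k → ℝ) :
    DifferentiableAt ℝ (stackedLagrangian L x) (Fin.append p w) := by
  have hsplit : DifferentiableAt ℝ (fun m : Fin (n + r) → Fin k → ℝ =>
      (x, (fun A => m (Fin.castAdd r A)), (fun F => m (Fin.natAdd n F)))) (Fin.append p w) := by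
    fun_prop
  have hL' := (hL.contDiffAt hU hx p w).differentiableAt (by simp)
  have himg : (x, (fun A => Fin.append p w (Fin.castAdd r A)),
      (fun F => Fin.append p w (Fin.natAdd n F))) = (x, p, w) := by simp
  rw [← himg] at hL'
  exact hL'.comp (Fin.append p w) hsplit

theorem sum_mul_pdM_add_sum_mul_pdM (hL : IsMixedForm U L) (hU : IsOpen U)
    {x : Fin n → ℝ} (hx : x ∈ U) (p : Fin n → Fin k → ℝ) (w : Fin r → Fin k → ℝ) (J K : Fin k) :
    ∑ B, p B J * pdM (fun p' => L x p' w) B K p + ∑ F, w F J * pdM (fun w' => L x p w') F K w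
      = (if J = K then 1 else 0) * L x p w := by
  have := sum_mul_pdM_eq_of_covariant (hL.differentiableAt_stackedLagrangian hU hx p w)
    (fun g hg => by
      rw [stackedLagrangian_mmul_append, stackedLagrangian_append, hL.2.1 x hx p w g hg]) J K
  simpa [Fin.sum_univ_add, pdM_stackedLagrangian_castAdd, pdM_stackedLagrangian_natAdd,
    stackedLagrangian_append] using this

end

variable {L : (Fin n → ℝ) → (Fin n → Fin n → ℝ) → (Fin r → Fin n → ℝ) → ℝ}

theorem pdM_idm (hL : IsMixedForm U L) (hU : IsOpen U) {x : Fin n → ℝ} (hx : x ∈ U)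
    (w : Fin r → Fin n → ℝ) (A K : Fin n) :
    pdM (fun p' => L x p' w) A K (idm n)
      = (if A = K then 1 else 0) * L x (idm n) w
        - ∑ F, w F A * pdM (fun w' => L x (idm n) w') F K w := by
  have := hL.sum_mul_pdM_add_sum_mul_pdM hU hx (idm n) w A K
  simp only [sum_idm_mul] at this
  linarith

theorem pdV_pdM_idm (hL : IsMixedForm U L) (hU : IsOpen U) {x : Fin n → ℝ} (hx : x ∈ U)
    (w : Fin r → Fin n → ℝ) (A K B : Fin n) :
    pdV (fun x' => pdM (fun p' => L x' p' w) A K (idm n)) B x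
      = (if A = K then 1 else 0) * pdV (fun x' => L x' (idm n) w) B x
        - ∑ F, w F A * pdV (fun x' => pdM (fun w' => L x' (idm n) w') F K w) B x := by
  have hev : (fun x' => pdM (fun p' => L x' p' w) A K (idm n)) =ᶠ[𝓝 x]
      fun x' => (if A = K then 1 else 0) * L x' (idm n) w
        - ∑ F, w F A * pdM (fun w' => L x' (idm n) w') F K w := by
    filter_upwards [hU.mem_nhds hx] with x' hx' using hL.pdM_idm hU hx' w A K
  have hG : ContDiffAt ℝ 2 (fun q : (Fin n → ℝ) × (Fin r → Fin n → ℝ) => L q.1 (idm n) q.2)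
      (x, w) :=
    ((hL.contDiffAt hU hx (idm n) w).of_le (WithTop.coe_le_coe.mpr le_top)).comp (x, w)
      (contDiffAt_fst.prodMk (contDiffAt_const.prodMk contDiffAt_snd))
  have hd0 : DifferentiableAt ℝ (fun x' => L x' (idm n) w) x :=
    (hG.differentiableAt (by norm_num)).comp (f := fun x' => (x', w)) x
      (differentiableAt_id.prodMk (differentiableAt_const w))
  have hdF : ∀ F, DifferentiableAt ℝ (fun x' => pdM (fun w' => L x' (idm n) w') F K w) x :=
    fun F => differentiableAt_pdM (G := fun x' w' => L x' (idm n) w') hG F K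
  have hcomb := (hd0.hasFDerivAt.const_mul (if A = K then (1 : ℝ) else 0)).fun_sub
    (HasFDerivAt.fun_sum (u := Finset.univ) fun F _ => (hdF F).hasFDerivAt.const_mul (w F A))
  rw [pdV_congr_s19 hev, pdV_eq_fderiv hcomb.differentiableAt, hcomb.fderiv, pdV_eq_fderiv hd0]
  split_ifs <;> simp [pdV_eq_fderiv (hdF _)]

end IsMixedForm

/-- For an even mixed form `𝓛` of codegree `n` and additional
degree `r` on `U ⊆ ℝⁿ`, with corresponding even `r`-form `L(x, w) := 𝓛(x, I_n, w)`,
one has for all `x ∈ U`, `w`, `w'`: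
`Σ_{K,A} w'^K ∂²𝓛/∂x^A∂p_A^K (x, I_n, w) = Σ_A w'^A ∂L/∂x^A (x, w) −
Σ_{A,F,B} w'^A w_F^B ∂²L/∂x^B∂w_F^A (x, w)`; i.e. the differential of mixed forms
corresponds to the differential of forms as Lagrangians of paths. -/
theorem statement_19 (n r : ℕ) (U : Set (Fin n → ℝ)) (hU : IsOpen U)
    (L : (Fin n → ℝ) → (Fin n → Fin n → ℝ) → (Fin r → Fin n → ℝ) → ℝ)
    (hL : IsMixedForm U L) :
    ∀ x ∈ U, ∀ (w : Fin r → Fin n → ℝ) (w' : Fin n → ℝ),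
      ∑ K, ∑ A, w' K * pdV (fun x' => pdM (fun p' => L x' p' w) A K (idm n)) A x
        = ∑ A, w' A * pdV (fun x' => L x' (idm n) w) A x
          - ∑ A, ∑ F, ∑ B, w' A * w F B *
              pdV (fun x' => pdM (fun w2 => L x' (idm n) w2) F A w) B x := by
  intro x hx w w'
  simp only [hL.pdV_pdM_idm hU hx, mul_sub, Finset.sum_sub_distrib, Finset.mul_sum]
  congr 1
  · simp [ite_mul, mul_ite, Finset.sum_ite_eq']
  · exact Finset.sum_congr rfl fun A _ => Finset.sum_comm.trans (by simp only [mul_assoc])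
end
end
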